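/- arXiv:2406.02444 — 2 statements merged into one kernel-verified Lean document; each statement's English description precedes it below -/
import Mathlib

section
/- For the four-qudit code, the single-damping diagonal matrix element on the first qudit satisfies ⟨m_L| (A_1 ⊗ A_0^{⊗3})† (A_1 ⊗ A_0^{⊗3}) |m_L⟩ = (γ/d) ∑_{i=1}^{d−1} i (1−γ)^{2i + 2((i+m) mod d) − 1}, whose leading-order term in γ is ((d−1)/2) γ, independent of m. -/
open Matrix

/-- The qudit amplitude-damping Kraus operator `A_k`. -/
noncomputable def ampDamp (d : ℕ) (γ : ℝ) (k : ℕ) : Matrix (Fin d) (Fin d) ℂ :=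
  fun a b => if (a : ℕ) + k = (b : ℕ) then
    ((Real.sqrt (((b : ℕ).choose k) * ((1 - γ) ^ ((b : ℕ) - k) * γ ^ k)) : ℝ) : ℂ)
  else 0

/-- The four-qudit codeword `|m_L⟩`. -/
noncomputable def codeword (d : ℕ) [NeZero d] (m : Fin d) :
    Fin d × Fin d × Fin d × Fin d → ℂ :=
  fun p => (1 / (Real.sqrt d : ℂ)) *
    (if p.2.1 = p.1 ∧ p.2.2.1 = p.1 + m ∧ p.2.2.2 = p.1 + m then 1 else 0)

/-- Four-fold tensor product of single-qudit operators. -/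
def tens4 {d : ℕ} (A B C D : Matrix (Fin d) (Fin d) ℂ) :
    Matrix (Fin d × Fin d × Fin d × Fin d) (Fin d × Fin d × Fin d × Fin d) ℂ :=
  fun p q => A p.1 q.1 * B p.2.1 q.2.1 * C p.2.2.1 q.2.2.1 * D p.2.2.2 q.2.2.2

/-- The inner product `⟨v|w⟩`. -/
noncomputable def inn {α : Type*} [Fintype α] (v w : α → ℂ) : ℂ :=
  ∑ p, (starRingEnd ℂ) (v p) * w p

lemma ampDamp_zero_apply (d : ℕ) (γ : ℝ) (a b : Fin d) :
    ampDamp d γ 0 a b = if a = b then ((Real.sqrt ((1 - γ) ^ (b : ℕ)) : ℝ) : ℂ) else 0 := by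
  simp [ampDamp, Fin.val_eq_val]

lemma mulVec_eq (d : ℕ) [NeZero d] (γ : ℝ) (m : Fin d) (p : Fin d × Fin d × Fin d × Fin d) :
    (tens4 (ampDamp d γ 1) (ampDamp d γ 0) (ampDamp d γ 0)
        (ampDamp d γ 0)).mulVec (codeword d m) p
    = (1 / (Real.sqrt d : ℂ)) * ampDamp d γ 1 p.1 p.2.1
        * ((Real.sqrt ((1 - γ) ^ (p.2.1 : ℕ)) : ℝ) : ℂ)
        * (if p.2.2.1 = p.2.1 + m then ((Real.sqrt ((1 - γ) ^ ((p.2.2.1 : ℕ))) : ℝ) : ℂ) else 0)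
        * (if p.2.2.2 = p.2.1 + m then ((Real.sqrt ((1 - γ) ^ ((p.2.2.2 : ℕ))) : ℝ) : ℂ) else 0) := by
  simp only [mulVec, dotProduct, tens4, codeword]
  rw [Fintype.sum_prod_type]
  simp only [Fintype.sum_prod_type]
  simp only [ampDamp_zero_apply, mul_ite, mul_zero, mul_one, ite_and, ite_mul, zero_mul]
  simp only [Finset.sum_ite_irrel, Finset.sum_const_zero, Finset.sum_ite_eq, Finset.sum_ite_eq', Finset.mem_univ, ite_true]
  have hre : ∀ x : Fin d,
      (if p.2.2.2 = x + m then
        if p.2.2.1 = x + m then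
          if p.2.1 = x then
            ampDamp d γ 1 p.1 x * ((Real.sqrt ((1 - γ) ^ (x:ℕ)):ℝ):ℂ) * ((Real.sqrt ((1 - γ) ^ ((x + m : Fin d):ℕ)):ℝ):ℂ) * ((Real.sqrt ((1 - γ) ^ ((x + m : Fin d):ℕ)):ℝ):ℂ) * (1 / (Real.sqrt d : ℂ))
          else 0
        else 0
      else 0)
      = if p.2.1 = x then
          (if p.2.2.2 = x + m then
            if p.2.2.1 = x + m then
              ampDamp d γ 1 p.1 x * ((Real.sqrt ((1 - γ) ^ (x:ℕ)):ℝ):ℂ) * ((Real.sqrt ((1 - γ) ^ ((x + m : Fin d):ℕ)):ℝ):ℂ) * ((Real.sqrt ((1 - γ) ^ ((x + m : Fin d):ℕ)):ℝ):ℂ) * (1 / (Real.sqrt d : ℂ))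
            else 0
          else 0) else 0 := by
    intro x; split_ifs <;> rfl
  rw [Finset.sum_congr rfl fun x _ => hre x, Finset.sum_ite_eq]
  simp only [Finset.mem_univ, ite_true]
  split_ifs <;> try rfl
  all_goals rename_i h1 h2; rw [h1, h2]; ring


/-- The single-damping diagonal matrix element on the first qudit equals
`(γ/d) ∑_{i=1}^{d-1} i (1-γ)^(2i + 2((i+m) mod d) - 1)`, whose leading-order
coefficient in `γ` is `(d-1)/2`, independent of `m`. -/
theorem single_damping_matrix_element (d : ℕ) [NeZero d] (hd : 2 ≤ d)
    (γ : ℝ) (hγ : γ ∈ Set.Ioo (0 : ℝ) 1) (m : Fin d) :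
    inn ((tens4 (ampDamp d γ 1) (ampDamp d γ 0) (ampDamp d γ 0)
          (ampDamp d γ 0)).mulVec (codeword d m))
        ((tens4 (ampDamp d γ 1) (ampDamp d γ 0) (ampDamp d γ 0)
          (ampDamp d γ 0)).mulVec (codeword d m))
      = (((γ / d) * ∑ i ∈ Finset.Icc 1 (d - 1),
          (i : ℝ) * (1 - γ) ^ (2 * i + 2 * ((i + (m : ℕ)) % d) - 1) : ℝ) : ℂ) ∧
    Filter.Tendsto (fun g : ℝ => (1 / d : ℝ) * ∑ i ∈ Finset.Icc 1 (d - 1),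
        (i : ℝ) * (1 - g) ^ (2 * i + 2 * ((i + (m : ℕ)) % d) - 1))
      (nhds 0) (nhds ((d - 1 : ℝ) / 2)) := by
  constructor
  ·
    obtain ⟨hγ0, hγ1⟩ := hγ
    have h1γ : (0:ℝ) ≤ 1 - γ := by linarith
    have hdR : (0:ℝ) ≤ (d:ℝ) := Nat.cast_nonneg d
    have hd0 : (d:ℝ) ≠ 0 := Nat.cast_ne_zero.mpr (NeZero.ne d)
    simp only [inn, mulVec_eq]
    rw [Fintype.sum_prod_type]
    simp only [Fintype.sum_prod_type]
    simp only [ampDamp, _root_.map_mul, apply_ite (starRingEnd ℂ), map_zero, _root_.map_one,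
      map_div₀, Complex.conj_ofReal, mul_ite, ite_mul, zero_mul, mul_zero,
      Finset.sum_ite_irrel, Finset.sum_const_zero, Finset.sum_ite_eq', Finset.mem_univ, ite_true]
    rw [Finset.sum_comm]
    have key : ∀ y : Fin d,
        (∑ x : Fin d,
          if (x:ℕ) + 1 = (y:ℕ) then
            if (x:ℕ) + 1 = (y:ℕ) then
              1 / (Real.sqrt d : ℂ) * ((Real.sqrt (((y:ℕ).choose 1) * ((1 - γ) ^ ((y:ℕ) - 1) * γ ^ 1)):ℝ):ℂ) * ((Real.sqrt ((1 - γ) ^ (y:ℕ)):ℝ):ℂ) *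
                  ((Real.sqrt ((1 - γ) ^ ((y + m : Fin d):ℕ)):ℝ):ℂ) *
                  ((Real.sqrt ((1 - γ) ^ ((y + m : Fin d):ℕ)):ℝ):ℂ) *
                (1 / (Real.sqrt d : ℂ) * ((Real.sqrt (((y:ℕ).choose 1) * ((1 - γ) ^ ((y:ℕ) - 1) * γ ^ 1)):ℝ):ℂ) * ((Real.sqrt ((1 - γ) ^ (y:ℕ)):ℝ):ℂ) *
                  ((Real.sqrt ((1 - γ) ^ ((y + m : Fin d):ℕ)):ℝ):ℂ) *
                  ((Real.sqrt ((1 - γ) ^ ((y + m : Fin d):ℕ)):ℝ):ℂ))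
            else 0
          else 0)
        = ((γ / d * ((y:ℕ) * (1 - γ) ^ (2 * (y:ℕ) + 2 * (((y:ℕ) + (m:ℕ)) % d) - 1)) : ℝ) : ℂ) := by
      intro y
      rcases Nat.eq_zero_or_pos (y:ℕ) with hy | hy
      · rw [Finset.sum_eq_zero (fun x _ => by rw [if_neg (by omega)]), hy]
        norm_num
      · have hyd : (y:ℕ) - 1 < d := by omega
        have hcond : ∀ x : Fin d, ((x:ℕ) + 1 = (y:ℕ)) ↔ x = ⟨(y:ℕ) - 1, hyd⟩ := by
          intro x; rw [Fin.ext_iff]; simp; omega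
        simp only [hcond]
        rw [Finset.sum_ite_eq', if_pos (Finset.mem_univ _), if_pos rfl]
        set j : ℕ := ((y + m : Fin d):ℕ) with hj
        have hjval : j = (((y:ℕ) + (m:ℕ)) % d) := by rw [hj, Fin.add_def]
        rw [← hjval]
        push_cast [← Complex.ofReal_mul, ← Complex.ofReal_div, ← Complex.ofReal_one]
        rw [Complex.ofReal_inj]
        have e1 : Real.sqrt d * Real.sqrt d = d := Real.mul_self_sqrt hdR
        have e2 : Real.sqrt ((y:ℕ) * ((1 - γ) ^ ((y:ℕ) - 1) * γ ^ 1)) *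
            Real.sqrt ((y:ℕ) * ((1 - γ) ^ ((y:ℕ) - 1) * γ ^ 1)) = (y:ℕ) * ((1 - γ) ^ ((y:ℕ) - 1) * γ ^ 1) :=
          Real.mul_self_sqrt (by positivity)
        have e3 : Real.sqrt ((1 - γ) ^ (y:ℕ)) * Real.sqrt ((1 - γ) ^ (y:ℕ)) = (1 - γ) ^ (y:ℕ) :=
          Real.mul_self_sqrt (by positivity)
        have e4 : Real.sqrt ((1 - γ) ^ j) * Real.sqrt ((1 - γ) ^ j) = (1 - γ) ^ j :=
          Real.mul_self_sqrt (by positivity)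
        have epow : (2 * (y:ℕ) + 2 * j - 1) = ((y:ℕ) - 1) + ((y:ℕ) + (j + j)) := by omega
        have hgen : ∀ a b c e : ℝ, (1/a * b * c * e * e) * (1/a * b * c * e * e)
            = 1/(a*a) * (b*b) * (c*c) * ((e*e)*(e*e)) := by intros; ring
        rw [Nat.choose_one_right, epow, pow_add, pow_add, pow_add, hgen, e1, e2, e3, e4]
        field_simp
    rw [Finset.sum_congr rfl fun y _ => key y]
    rw [show (∑ y : Fin d, ((γ / d * ((y:ℕ) * (1 - γ) ^ (2 * (y:ℕ) + 2 * (((y:ℕ) + (m:ℕ)) % d) - 1)) : ℝ) : ℂ))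
        = ∑ i ∈ Finset.range d, ((γ / d * ((i:ℝ) * (1 - γ) ^ (2 * i + 2 * ((i + (m:ℕ)) % d) - 1)) : ℝ) : ℂ)
      from Fin.sum_univ_eq_sum_range (fun i => ((γ / d * ((i:ℝ) * (1 - γ) ^ (2 * i + 2 * ((i + (m:ℕ)) % d) - 1)) : ℝ) : ℂ)) d]
    have h1 : Finset.range d = insert 0 (Finset.Icc 1 (d-1)) := by
      ext x; simp [Finset.mem_range, Finset.mem_Icc]; omega
    rw [h1, Finset.sum_insert (by simp)]
    norm_num
    rw [Finset.mul_sum]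
  · have hcont : Continuous (fun g : ℝ => (1 / d : ℝ) * ∑ i ∈ Finset.Icc 1 (d - 1),
        (i : ℝ) * (1 - g) ^ (2 * i + 2 * ((i + (m : ℕ)) % d) - 1)) := by
      fun_prop
    have htend := hcont.tendsto 0
    convert htend using 2
    simp only [sub_zero, one_pow, mul_one]
    have hsum : ∑ i ∈ Finset.Icc 1 (d-1), (i:ℝ) = (d:ℝ)*((d:ℝ)-1)/2 := by
      have h1 : Finset.range d = insert 0 (Finset.Icc 1 (d-1)) := by
        ext x; simp [Finset.mem_range, Finset.mem_Icc]; omega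
      have h2 : ∑ i ∈ Finset.range d, (i:ℝ) = ∑ i ∈ Finset.Icc 1 (d-1), (i:ℝ) := by
        rw [h1, Finset.sum_insert (by simp)]; simp
      have h3 := Finset.sum_range_id_mul_two d
      have h4 := congrArg (Nat.cast (R := ℝ)) h3
      push_cast [Nat.cast_sub (show 1 ≤ d by omega)] at h4
      rw [← h2]
      linarith
    rw [hsum]
    have hd0 : (d:ℝ) ≠ 0 := Nat.cast_ne_zero.mpr (NeZero.ne d)
    field_simp
end

section
/- Each codeword of the [2M+2, M] qudit code is a +1 eigenvector of all its stabilizer generators: of X_d^{⊗(2M+2)}, and of each operator placing Z_d^{d−s} ⊗ Z_d^{s} on the (2j+1)-th and (2j+2)-th tensor factors (for j = 0, 1, …, M) and identity elsewhere, for every s ∈ {1,…,d−1}. -/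
open Matrix

/-- The qudit Pauli shift operator `X_d`. -/
def pauliX (d : ℕ) [NeZero d] : Matrix (Fin d) (Fin d) ℂ :=
  fun a b => if a = b + 1 then 1 else 0

/-- The qudit Pauli phase operator `Z_d`. -/
noncomputable def pauliZ (d : ℕ) [NeZero d] : Matrix (Fin d) (Fin d) ℂ :=
  fun a b => if a = b then Complex.exp (2 * Real.pi * Complex.I * (a : ℕ) / d) else 0

/-- The codeword of the `[2M+2, M]` qudit code. -/
noncomputable def genCodeword (d M : ℕ) [NeZero d] (m : Fin M → Fin d) :
    (Fin (2 * M + 2) → Fin d) → ℂ :=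
  fun f => (1 / (Real.sqrt d : ℂ)) *
    (if f ⟨1, by omega⟩ = f ⟨0, by omega⟩ ∧
        ∀ j : Fin M,
          f ⟨2 * (j : ℕ) + 2, by have := j.isLt; omega⟩ = f ⟨0, by omega⟩ + m j ∧
          f ⟨2 * (j : ℕ) + 3, by have := j.isLt; omega⟩ = f ⟨0, by omega⟩ + m j
     then 1 else 0)

/-- The `X`-type stabilizer generator `X_d^{⊗(2M+2)}`. -/
def stabX (d M : ℕ) [NeZero d] :
    Matrix (Fin (2 * M + 2) → Fin d) (Fin (2 * M + 2) → Fin d) ℂ :=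
  fun f g => ∏ t : Fin (2 * M + 2), pauliX d (f t) (g t)

/-- The `Z`-type stabilizer generator placing `Z_d^{d-s} ⊗ Z_d^{s}` on the
`(2j+1)`-th and `(2j+2)`-th tensor factors (1-indexed, `j = 0,…,M`) and the
identity elsewhere. -/
noncomputable def stabZ (d M s : ℕ) [NeZero d] (j : Fin (M + 1)) :
    Matrix (Fin (2 * M + 2) → Fin d) (Fin (2 * M + 2) → Fin d) ℂ :=
  fun f g => ∏ t : Fin (2 * M + 2),
    if (t : ℕ) = 2 * (j : ℕ) then (pauliZ d ^ (d - s)) (f t) (g t)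
    else if (t : ℕ) = 2 * (j : ℕ) + 1 then (pauliZ d ^ s) (f t) (g t)
    else (if f t = g t then 1 else 0)

lemma pauliZ_pow (d : ℕ) [NeZero d] (k : ℕ) (a b : Fin d) :
    (pauliZ d ^ k) a b =
      if a = b then Complex.exp (2 * Real.pi * Complex.I * (a : ℕ) / d) ^ k else 0 := by
  induction k with
  | zero => simp [Matrix.one_apply]
  | succ k ih =>
    rw [pow_succ, Matrix.mul_apply]
    rw [Finset.sum_eq_single b]
    · rw [ih]
      by_cases h : a = b
      · subst h; simp [pauliZ, pow_succ]
      · simp [pauliZ, h]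
    · intro c _ hc; simp [pauliZ, hc]
    · simp

lemma exp_pow_d (d : ℕ) [NeZero d] (a : Fin d) :
    Complex.exp (2 * Real.pi * Complex.I * (a : ℕ) / d) ^ d = 1 := by
  rw [← Complex.exp_nat_mul]
  have hd : (d : ℂ) ≠ 0 := Nat.cast_ne_zero.mpr (NeZero.ne d)
  have h : (d : ℂ) * (2 * Real.pi * Complex.I * (a : ℕ) / d)
      = (a : ℕ) * (2 * Real.pi * Complex.I) := by
    field_simp
  rw [h, Complex.exp_nat_mul_two_pi_mul_I]

lemma pair_eq (d M : ℕ) [NeZero d] (m : Fin M → Fin d) (f : Fin (2 * M + 2) → Fin d)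
    (h1 : f ⟨1, by omega⟩ = f ⟨0, by omega⟩)
    (h2 : ∀ j : Fin M,
      f ⟨2 * (j : ℕ) + 2, by have := j.isLt; omega⟩ = f ⟨0, by omega⟩ + m j ∧
      f ⟨2 * (j : ℕ) + 3, by have := j.isLt; omega⟩ = f ⟨0, by omega⟩ + m j)
    (j : Fin (M + 1)) :
    f ⟨2 * (j : ℕ), by have := j.isLt; omega⟩ =
      f ⟨2 * (j : ℕ) + 1, by have := j.isLt; omega⟩ := by
  obtain ⟨jv, hjv⟩ := j
  cases jv with
  | zero => exact h1.symm
  | succ k =>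
    have hkM : k < M := by omega
    have h := h2 ⟨k, hkM⟩
    exact h.1.trans h.2.symm

set_option maxHeartbeats 1000000 in
/-- Each codeword of the `[2M+2, M]` qudit code is a `+1` eigenvector of all
the stabilizer generators. -/
theorem gen_codeword_stabilized (d M : ℕ) [NeZero d] (hd : 2 ≤ d) (hM : 1 ≤ M)
    (s : ℕ) (hs1 : 1 ≤ s) (hs2 : s ≤ d - 1) (m : Fin M → Fin d) :
    (stabX d M).mulVec (genCodeword d M m) = genCodeword d M m ∧
    ∀ j : Fin (M + 1),
      (stabZ d M s j).mulVec (genCodeword d M m) = genCodeword d M m := by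
  constructor
  · funext f
    have key : ∀ g : Fin (2 * M + 2) → Fin d,
        stabX d M f g = if g = fun t => f t - 1 then 1 else 0 := by
      intro g
      by_cases h : g = fun t => f t - 1
      · subst h
        simp [stabX, pauliX, sub_add_cancel]
      · rw [if_neg h]
        rw [funext_iff] at h
        push_neg at h
        obtain ⟨t, ht⟩ := h
        refine Finset.prod_eq_zero (Finset.mem_univ t) ?_
        rw [pauliX, if_neg]
        intro hft
        exact ht (eq_sub_iff_add_eq.mpr hft.symm)
    simp only [mulVec, dotProduct]
    simp_rw [key]
    simp only [ite_mul, one_mul, zero_mul, Finset.sum_ite_eq', Finset.mem_univ, if_true]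
    simp only [genCodeword]
    congr 1
    refine if_congr ?_ rfl rfl
    simp only [sub_add_eq_add_sub, sub_left_inj]
  · intro j
    funext f
    have hj := j.isLt
    set t0 : Fin (2 * M + 2) := ⟨2 * (j : ℕ), by omega⟩ with ht0
    set t1 : Fin (2 * M + 2) := ⟨2 * (j : ℕ) + 1, by omega⟩ with ht1
    have ht01 : t0 ≠ t1 := by
      simp [ht0, ht1, Fin.ext_iff]
    set e : Fin d → ℂ := fun a => Complex.exp (2 * Real.pi * Complex.I * (a : ℕ) / d)
      with he
    have key : ∀ g : Fin (2 * M + 2) → Fin d,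
        stabZ d M s j f g =
          if g = f then e (f t0) ^ (d - s) * e (f t1) ^ s else 0 := by
      intro g
      have hfac : ∀ t : Fin (2 * M + 2),
          (if (t : ℕ) = 2 * (j : ℕ) then (pauliZ d ^ (d - s)) (f t) (g t)
           else if (t : ℕ) = 2 * (j : ℕ) + 1 then (pauliZ d ^ s) (f t) (g t)
           else (if f t = g t then 1 else 0)) =
          (if f t = g t then 1 else 0) *
            ((if t = t0 then e (f t0) ^ (d - s) else 1) *
              (if t = t1 then e (f t1) ^ s else 1)) := by
        intro t
        have h0 : ((t : ℕ) = 2 * (j : ℕ)) ↔ t = t0 := by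
          simp [ht0, Fin.ext_iff]
        have h1 : ((t : ℕ) = 2 * (j : ℕ) + 1) ↔ t = t1 := by
          simp [ht1, Fin.ext_iff]
        by_cases e0 : t = t0
        · subst e0
          rw [if_pos (h0.mpr rfl), pauliZ_pow, if_pos rfl, if_neg ht01]
          by_cases hh : f t0 = g t0 <;> simp [hh, he]
        · by_cases e1 : t = t1
          · subst e1
            rw [if_neg (fun hh => e0 (h0.mp hh)), if_pos (h1.mpr rfl),
              pauliZ_pow, if_neg e0, if_pos rfl]
            by_cases hh : f t1 = g t1 <;> simp [hh, he]
          · rw [if_neg (fun hh => e0 (h0.mp hh)), if_neg (fun hh => e1 (h1.mp hh)),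
              if_neg e0, if_neg e1]
            ring
      unfold stabZ
      simp_rw [hfac]
      rw [Finset.prod_mul_distrib, Finset.prod_mul_distrib]
      rw [Finset.prod_ite_eq' Finset.univ t0, Finset.prod_ite_eq' Finset.univ t1]
      simp only [Finset.mem_univ, if_true]
      by_cases h : g = f
      · subst h; simp
      · rw [if_neg h]
        rw [funext_iff] at h
        push_neg at h
        obtain ⟨t, ht⟩ := h
        have hz : (∏ t : Fin (2 * M + 2), if f t = g t then (1:ℂ) else 0) = 0 :=
          Finset.prod_eq_zero (Finset.mem_univ t) (if_neg fun hh => ht hh.symm)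
        rw [hz, zero_mul]
    simp only [mulVec, dotProduct]
    simp_rw [key]
    simp only [ite_mul, zero_mul, Finset.sum_ite_eq', Finset.mem_univ, if_true]
    -- now goal : e (f t0) ^ (d - s) * e (f t1) ^ s * genCodeword d M m f = genCodeword d M m f
    unfold genCodeword
    by_cases hP : f ⟨1, by omega⟩ = f ⟨0, by omega⟩ ∧
        ∀ j : Fin M,
          f ⟨2 * (j : ℕ) + 2, by have := j.isLt; omega⟩ = f ⟨0, by omega⟩ + m j ∧
          f ⟨2 * (j : ℕ) + 3, by have := j.isLt; omega⟩ = f ⟨0, by omega⟩ + m j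
    · rw [if_pos hP]
      have hft : f t0 = f t1 := by
        rw [ht0, ht1]
        exact pair_eq d M m f hP.1 hP.2 j
      rw [hft, ← pow_add, Nat.sub_add_cancel (by omega : s ≤ d), he]
      rw [exp_pow_d, one_mul]
    · rw [if_neg hP]
      ring
end
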